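/- arXiv:2510.04043 — 5 statements merged into one kernel-verified Lean document; each statement's English description precedes it below -/
import Mathlib

section
/- Let Q be a nonnegative route-cost function on routes R = (v₁,...,v_ℓ), and define the disaggregation Q̂(R, v₁) = Q((v₁)) and Q̂(R, v_i) = Q((v₁,...,v_i)) - Q((v₁,...,v_{i-1})) for i ≥ 2. If Q is superadditive (Q(R₁ ⊕ R₂) ≥ Q(R₁) + Q(R₂) for contiguous decompositions of subroutes of admissible routes), then: (a) each Q̂(R, v_i) is nonnegative; (b) ∑_{i=1}^{ℓ} Q̂(R, v_i) = Q(R); and (c) for every contiguous subroute R' = (v_a,...,v_b) of R, ∑_{i=a}^{b} Q̂(R, v_i) ≥ Q(R') (monotonicity). -/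
/-- If `Q` is a nonnegative superadditive route-cost function, then the prefix-difference
disaggregation `Q̂(R,v₁) = Q((v₁))`, `Q̂(R,vᵢ) = Q((v₁,…,vᵢ)) - Q((v₁,…,v_{i-1}))` is
(a) nonnegative, (b) sums to `Q R`, and (c) monotone: for every contiguous subroute
`R' = (v_a,…,v_b)` of `R`, `∑_{i=a}^{b} Q̂(R,vᵢ) ≥ Q R'`. -/
theorem stmt5 {V : Type*} (𝔯 : Set (List V)) (Q : List V → ℚ)
    (hQ0 : ∀ R, 0 ≤ Q R)
    (hsuper : ∀ R ∈ 𝔯, ∀ R₁ R₂ : List V, (R₁ ++ R₂) <:+: R → Q R₁ + Q R₂ ≤ Q (R₁ ++ R₂))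
    (R : List V) (hR : R ∈ 𝔯) (hnd : R.Nodup)
    (Qhat : ℕ → ℚ)
    (hQhat : ∀ i, Qhat i =
      if i = 0 then Q (R.take 1) else Q (R.take (i + 1)) - Q (R.take i)) :
    (∀ i < R.length, 0 ≤ Qhat i) ∧
    (∑ i ∈ Finset.range R.length, Qhat i = Q R) ∧
    (∀ a b : ℕ, a ≤ b → b < R.length →
      Q ((R.drop a).take (b + 1 - a)) ≤ ∑ i ∈ Finset.Icc a b, Qhat i) := by
  have hQnil : Q ([] : List V) = 0 := by
    have h := hsuper R hR [] [] (by simp)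
    simp at h
    linarith [hQ0 ([] : List V)]
  -- key superadditivity specialization: for m ≤ n, Q (take m) + Q (seg) ≤ Q (take n)
  have hseg : ∀ m n : ℕ, m ≤ n →
      Q (R.take m) + Q ((R.drop m).take (n - m)) ≤ Q (R.take n) := by
    intro m n hmn
    have hdec : R.take n = R.take m ++ (R.drop m).take (n - m) := by
      rw [← List.take_add]
      congr 1
      omega
    have hinf : (R.take m ++ (R.drop m).take (n - m)) <:+: R := by
      rw [← hdec]; exact (List.take_prefix n R).isInfix
    have := hsuper R hR _ _ hinf
    rw [← hdec] at this
    exact this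
  -- telescoping: sum over range n is Q (take n) for n ≥ 1
  have tel : ∀ n : ℕ, ∑ i ∈ Finset.range (n + 1), Qhat i = Q (R.take (n + 1)) := by
    intro n
    induction n with
    | zero => simp [hQhat 0]
    | succ k ih =>
        rw [Finset.sum_range_succ, ih, hQhat (k + 1)]
        simp
  refine ⟨?_, ?_, ?_⟩
  · intro i _
    rcases Nat.eq_zero_or_pos i with h0 | h0
    · subst h0; rw [hQhat 0]; simp [hQ0]
    · rw [hQhat i]
      rw [if_neg (by omega)]
      have := hseg i (i + 1) (by omega)
      have h1 : (i + 1) - i = 1 := by omega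
      rw [h1] at this
      have := hQ0 ((R.drop i).take 1)
      linarith
  · rcases Nat.eq_zero_or_pos R.length with h0 | h0
    · rw [h0]
      simp [List.length_eq_zero_iff.mp h0, hQnil]
    · obtain ⟨n, hn⟩ : ∃ n, R.length = n + 1 := ⟨R.length - 1, by omega⟩
      rw [hn, tel n, ← hn, List.take_length]
  · intro a b hab hb
    have hsum : ∑ i ∈ Finset.Icc a b, Qhat i =
        ∑ i ∈ Finset.range (b + 1), Qhat i - ∑ i ∈ Finset.range a, Qhat i := by
      rw [← Finset.Ico_add_one_right_eq_Icc]
      exact Finset.sum_Ico_eq_sub _ (by omega)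
    have h1 : ∑ i ∈ Finset.range (b + 1), Qhat i = Q (R.take (b + 1)) := tel b
    have h2 : ∑ i ∈ Finset.range a, Qhat i = Q (R.take a) := by
      rcases Nat.eq_zero_or_pos a with h0 | h0
      · simp [h0, hQnil]
      · obtain ⟨m, hm⟩ : ∃ m, a = m + 1 := ⟨a - 1, by omega⟩
        rw [hm, tel m]
    have := hseg a (b + 1) (by omega)
    rw [hsum, h1, h2]
    linarith
end

section
/- Let Q be a weakly superadditive nonnegative route-cost function on a route R = (v₁,...,v_ℓ). Define greedily, for b = 1,...,ℓ: Δ_b = max_{1 ≤ a ≤ b} ( Q((v_a,...,v_b)) - ∑_{i=a}^{b-1} Q̂(R,v_i) ) and Q̂(R,v_b) = max(Δ_b, 0), finally adding Q(R) - ∑_i Q̂(R,v_i) to Q̂(R,v₁) if positive. Then the resulting values satisfy: Q̂(R,v_i) ≥ 0 for all i, ∑_{i=1}^{ℓ} Q̂(R,v_i) = Q(R), and ∑_{i=a}^{b} Q̂(R,v_i) ≥ Q((v_a,...,v_b)) for every 1 ≤ a ≤ b ≤ ℓ. -/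
/-!
Every positive greedy value `g b` is attained by some start `a ≤ b`, i.e. `g b` equals
`Q((v_a,…,v_b))` minus the greedy values already assigned on `v_a,…,v_{b-1}`. Following these
maximisers backwards from the end of the route, `∑_{i<n} g i` telescopes into the sum of `Q` over
pairwise disjoint contiguous subroutes of `(v_1,…,v_n)`, so weak superadditivity gives
`∑ g ≤ Q(R)`: the final top-up at `v_1` is then the nonnegative amount `Q(R) - ∑ g`. Domination
on `(v_a,…,v_b)` holds already for `g`, since `g b ≥ Δ_b` is at least the term of index `a`.
-/

namespace GreedyDisaggregation

variable {V : Type*}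

/-- The subroute `(v_a, …, v_b)` of `R`, with positions counted from `0`. -/
def subroute (R : List V) (a b : ℕ) : List V := (R.drop a).take (b + 1 - a)

def IsGreedy (Q : List V → ℚ) (R : List V) (g : ℕ → ℚ) : Prop :=
  ∀ b, g b = max ((Finset.range (b + 1)).sup' Finset.nonempty_range_add_one
    (fun a => Q (subroute R a b) - ∑ i ∈ Finset.Ico a b, g i)) 0

def WeaklySuperadditiveOn (Q : List V → ℚ) (L : List V) : Prop :=
  ∀ (t : ℕ) (Rs : Fin t → List V),
    (∀ i, Rs i <:+: L) → (∀ i j, i ≠ j → (Rs i).Disjoint (Rs j)) → ∑ i, Q (Rs i) ≤ Q L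

def IsPackingValue (Q : List V → ℚ) (L : List V) (x : ℚ) : Prop :=
  ∃ (t : ℕ) (Rs : Fin t → List V), (∀ i, Rs i <:+: L) ∧
    (∀ i j, i ≠ j → (Rs i).Disjoint (Rs j)) ∧ x = ∑ i, Q (Rs i)

section IsPackingValue

variable {Q : List V → ℚ} {L L' : List V} {x : ℚ}

theorem IsPackingValue.zero (Q : List V → ℚ) (L : List V) : IsPackingValue Q L 0 :=
  ⟨0, Fin.elim0, fun i => i.elim0, fun i => i.elim0, by simp⟩

theorem IsPackingValue.mono (hx : IsPackingValue Q L x) (hL : L <:+: L') :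
    IsPackingValue Q L' x := by
  obtain ⟨t, Rs, hinf, hdisj, rfl⟩ := hx
  exact ⟨t, Rs, fun i => (hinf i).trans hL, hdisj, rfl⟩

theorem IsPackingValue.append (hx : IsPackingValue Q L x) (S : List V)
    (hnd : (L ++ S).Nodup) : IsPackingValue Q (L ++ S) (x + Q S) := by
  obtain ⟨t, Rs, hinf, hdisj, rfl⟩ := hx
  have hLS : L.Disjoint S := List.disjoint_of_nodup_append hnd
  refine ⟨t + 1, Fin.cons S Rs, fun i => ?_, fun i j hij => ?_, ?_⟩
  · cases i using Fin.cases with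
    | zero => exact List.suffix_append L S |>.isInfix
    | succ i => exact (hinf i).trans (List.prefix_append L S).isInfix
  · cases i using Fin.cases <;> cases j using Fin.cases
    · exact absurd rfl hij
    · exact fun _ hS hR => hLS ((hinf _).subset hR) hS
    · exact fun _ hR hS => hLS ((hinf _).subset hR) hS
    · exact hdisj _ _ fun h => hij (congrArg Fin.succ h)
  · rw [Fin.sum_univ_succ, add_comm]
    simp only [Fin.cons_zero, Fin.cons_succ]

theorem IsPackingValue.le (hx : IsPackingValue Q L x) (hws : WeaklySuperadditiveOn Q L) :
    x ≤ Q L := by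
  obtain ⟨t, Rs, hinf, hdisj, rfl⟩ := hx
  exact hws t Rs hinf hdisj

end IsPackingValue

namespace IsGreedy

variable {Q : List V → ℚ} {R : List V} {g : ℕ → ℚ}

theorem nonneg (hg : IsGreedy Q R g) (b : ℕ) : 0 ≤ g b :=
  (hg b).symm ▸ le_max_right _ _

theorem subroute_le_sum (hg : IsGreedy Q R g) {a b : ℕ} (hab : a ≤ b) :
    Q (subroute R a b) ≤ ∑ i ∈ Finset.Icc a b, g i := by
  have hterm : Q (subroute R a b) - ∑ i ∈ Finset.Ico a b, g i ≤ g b := by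
    rw [hg b]
    exact (Finset.le_sup' (fun a => Q (subroute R a b) - ∑ i ∈ Finset.Ico a b, g i)
      (Finset.mem_range.mpr (Nat.lt_succ_of_le hab))).trans (le_max_left _ _)
  rw [← Finset.Ico_add_one_right_eq_Icc, Finset.sum_Ico_succ_top (by omega)]
  linarith

theorem exists_eq_of_pos (hg : IsGreedy Q R g) {b : ℕ} (hb : 0 < g b) :
    ∃ a ≤ b, g b = Q (subroute R a b) - ∑ i ∈ Finset.Ico a b, g i := by
  obtain ⟨a, ha, hmax⟩ := Finset.exists_mem_eq_sup' Finset.nonempty_range_add_one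
    (fun a => Q (subroute R a b) - ∑ i ∈ Finset.Ico a b, g i)
  refine ⟨a, Nat.lt_succ_iff.mp (Finset.mem_range.mp ha), ?_⟩
  rw [← hmax, hg b]
  rw [hg b] at hb
  exact max_eq_left (le_of_not_ge fun h => hb.ne' (max_eq_right h))

theorem isPackingValue_sum (hg : IsGreedy Q R g) (hnd : R.Nodup) (n : ℕ) :
    IsPackingValue Q (R.take n) (∑ i ∈ Finset.range n, g i) := by
  induction n using Nat.strong_induction_on with
  | _ n ih =>
  match n with
  | 0 => simpa using IsPackingValue.zero Q (R.take 0)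
  | n + 1 =>
    rcases (hg.nonneg n).eq_or_lt with hzero | hpos
    · rw [Finset.sum_range_succ, ← hzero, add_zero]
      exact (ih n n.lt_succ_self).mono (List.take_prefix_take_left n.le_succ).isInfix
    · obtain ⟨a, han, hgn⟩ := hg.exists_eq_of_pos hpos
      have htake : R.take (n + 1) = R.take a ++ subroute R a n := by
        rw [subroute, ← List.take_add, Nat.add_sub_cancel' (by omega)]
      have hsum : ∑ i ∈ Finset.range (n + 1), g i
          = ∑ i ∈ Finset.range a, g i + Q (subroute R a n) := by
        rw [Finset.sum_range_succ, hgn, ← Finset.sum_range_add_sum_Ico g han]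
        ring
      rw [hsum, htake]
      exact (ih a (by omega)).append _ (htake ▸ hnd.sublist (List.take_sublist _ _))

end IsGreedy

end GreedyDisaggregation

open GreedyDisaggregation in
/-- Correctness of the greedy disaggregation (Algorithm GetDisaggregation): if `Q` is a
nonnegative route-cost function that is weakly superadditive on the route `R`, and `g`
satisfies the greedy recurrence `g b = max Δ_b 0` with
`Δ_b = max_{a ≤ b} (Q((v_a,…,v_b)) - ∑_{i=a}^{b-1} g i)`, and `Q̂` is `g` with
`max (Q R - ∑ᵢ g i) 0` added at the first position, then `Q̂` is nonnegative, sums to `Q R`,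
and dominates `Q` on every contiguous subroute. -/
theorem stmt7 {V : Type*} (Q : List V → ℚ) (hQ0 : ∀ L, 0 ≤ Q L)
    (R : List V) (hnd : R.Nodup)
    (hws : ∀ (t : ℕ) (Rs : Fin t → List V),
      (∀ i, Rs i <:+: R) → (∀ i j, i ≠ j → (Rs i).Disjoint (Rs j)) →
      ∑ i, Q (Rs i) ≤ Q R)
    (g : ℕ → ℚ)
    (hg : ∀ b, g b = max ((Finset.range (b + 1)).sup' Finset.nonempty_range_add_one
        (fun a => Q ((R.drop a).take (b + 1 - a)) - ∑ i ∈ Finset.Ico a b, g i)) 0)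
    (Qhat : ℕ → ℚ)
    (hQhat : ∀ i, Qhat i =
      if i = 0 then g 0 + max (Q R - ∑ j ∈ Finset.range R.length, g j) 0 else g i) :
    (∀ i, 0 ≤ Qhat i) ∧
    (∑ i ∈ Finset.range R.length, Qhat i = Q R) ∧
    (∀ a b : ℕ, a ≤ b → b < R.length →
      Q ((R.drop a).take (b + 1 - a)) ≤ ∑ i ∈ Finset.Icc a b, Qhat i) := by
  have hgr : IsGreedy Q R g := hg
  have hsum_le : ∑ i ∈ Finset.range R.length, g i ≤ Q R := by
    have hpack := hgr.isPackingValue_sum hnd R.length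
    rw [List.take_length] at hpack
    exact hpack.le hws
  have hg_le : ∀ i, g i ≤ Qhat i := fun i => by
    rw [hQhat i]
    split_ifs with hi
    · exact hi ▸ le_add_of_nonneg_right (le_max_right _ _)
    · exact le_rfl
  refine ⟨fun i => (hgr.nonneg i).trans (hg_le i), ?_,
    fun a b hab _ => (hgr.subroute_le_sum hab).trans (Finset.sum_le_sum fun i _ => hg_le i)⟩
  cases R with
  | nil =>
    have h2 := hws 2 (fun _ => []) (fun _ => List.nil_infix) fun _ _ _ _ h _ => by simp at h
    simp only [Fin.sum_univ_two] at h2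
    simp only [List.length_nil, Finset.range_zero, Finset.sum_empty]
    linarith [hQ0 []]
  | cons v L =>
    simp only [List.length_cons, Finset.sum_range_succ'] at hsum_le ⊢
    simp only [hQhat, Nat.add_one_ne_zero, if_false, if_true, Finset.sum_range_succ',
      List.length_cons]
    rw [max_eq_left (by linarith)]
    ring
end

section
/- In the greedy disaggregation algorithm (Algorithm GetDisaggregation), after processing index b the invariant ∑_{i=1}^{b} Q̂(R, v_i) = ∑_{R' ∈ 𝒜_b} Q(R') holds, where 𝒜_b is the maintained set of pairwise customer-disjoint contiguous subroutes, 𝒜_0 = ∅, and 𝒜_b = 𝒜_{a-1} ∪ {(v_a,...,v_b)} when Δ_b > 0 with a the chosen argmax, and 𝒜_b = 𝒜_{b-1} otherwise. -/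
/-!
A customer `v_b` that opens a new subroute `(v_a, …, v_b)` has not been visited by any subroute
of `𝒜_{a-1}`, since those only visit `v_1, …, v_{a-1}` and the customers of `R` are distinct.
So the new subroute is really added to `𝒜_{a-1}`, and when `Δ_b > 0` the telescoping identity
`∑_{i ≤ b} Q̂(R,vᵢ) = ∑_{i < a} Q̂(R,vᵢ) + Q((v_a,…,v_b))` closes the induction.
-/

namespace List

variable {V : Type*}

/-- The contiguous subroute `(R[a], …, R[b])`. -/
def subroute (R : List V) (a b : ℕ) : List V := (R.drop a).take (b + 1 - a)

theorem subroute_subset_take (R : List V) {a b : ℕ} (hab : a ≤ b) :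
    R.subroute a b ⊆ R.take (b + 1) := by
  rw [subroute, take_drop, Nat.add_sub_cancel' (by omega)]
  exact drop_subset _ _

theorem getElem_mem_subroute (R : List V) {a b : ℕ} (hab : a ≤ b) (hb : b < R.length) :
    R[b] ∈ R.subroute a b := by
  have hlen : b - a < (R.subroute a b).length := by
    simp only [subroute, length_take, length_drop, lt_inf_iff]
    omega
  have hget : (R.subroute a b)[b - a] = R[b] := by
    simp only [subroute, getElem_take, getElem_drop]
    congr 1
    omega
  exact hget ▸ getElem_mem hlen

theorem Nodup.getElem_notMem_take {R : List V} (hnd : R.Nodup) {a b : ℕ} (hab : a ≤ b)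
    (hb : b < R.length) : R[b] ∉ R.take a := by
  rw [mem_take_iff_getElem]
  rintro ⟨j, hj, hjb⟩
  have := hnd.getElem_inj_iff.1 hjb
  omega

theorem subset_take_of_mem_disaggregation [DecidableEq V] {R : List V} {a : ℕ → ℕ}
    (ha_le : ∀ b, a b ≤ b) {A : ℕ → Finset (List V)} (hA0 : A 0 = ∅)
    (hA : ∀ b < R.length,
      A (b + 1) = insert (R.subroute (a b) b) (A (a b)) ∨ A (b + 1) = A b) :
    ∀ n ≤ R.length, ∀ L ∈ A n, L ⊆ R.take n := by
  intro n
  induction n using Nat.strong_induction_on with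
  | _ n IH =>
  rcases n with _ | b
  · simp [hA0]
  intro hb L hL
  have hab := ha_le b
  rcases hA b hb with hstep | hstep <;> rw [hstep] at hL
  · rcases Finset.mem_insert.1 hL with rfl | hL
    · exact R.subroute_subset_take hab
    · exact Subset.trans (IH (a b) (by omega) (by omega) L hL)
        (R.take_subset_take_left (by omega))
  · exact Subset.trans (IH b (by omega) (by omega) L hL) (R.take_subset_take_left (by omega))

end List

theorem stmt8_general {V : Type*} [DecidableEq V] (Q : List V → ℚ)
    (R : List V) (hnd : R.Nodup)
    (g : ℕ → ℚ) (a : ℕ → ℕ)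
    (ha_le : ∀ b, a b ≤ b)
    (hg : ∀ b < R.length, g b =
      max (Q ((R.drop (a b)).take (b + 1 - a b)) - ∑ i ∈ Finset.Ico (a b) b, g i) 0)
    (A : ℕ → Finset (List V))
    (hA0 : A 0 = ∅)
    (hA : ∀ b < R.length, A (b + 1) =
      if 0 < Q ((R.drop (a b)).take (b + 1 - a b)) - ∑ i ∈ Finset.Ico (a b) b, g i
      then insert ((R.drop (a b)).take (b + 1 - a b)) (A (a b))
      else A b) :
    ∀ n ≤ R.length, ∑ i ∈ Finset.range n, g i = ∑ R' ∈ A n, Q R' := by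
  have hsub := List.subset_take_of_mem_disaggregation ha_le hA0 fun b hb => by
    rw [hA b hb]
    split_ifs <;> simp [List.subroute]
  intro n
  induction n using Nat.strong_induction_on with
  | _ n IH =>
  rcases n with _ | b
  · simp [hA0]
  intro hb
  have hab := ha_le b
  rw [hA b hb, Finset.sum_range_succ, hg b hb]
  split_ifs with hpos
  · have hfresh : (R.drop (a b)).take (b + 1 - a b) ∉ A (a b) := fun hmem =>
      hnd.getElem_notMem_take hab hb <|
        hsub (a b) (by omega) _ hmem (R.getElem_mem_subroute hab hb)
    rw [Finset.sum_insert hfresh, ← IH (a b) (by omega) (by omega), max_eq_left hpos.le,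
      ← Finset.sum_range_add_sum_Ico g hab]
    ring
  · rw [max_eq_right (not_lt.1 hpos), IH b (by omega) (by omega), add_zero]

/-- Invariant of the greedy disaggregation algorithm: after processing index `b`,
`∑_{i<b} Q̂(R,vᵢ) = ∑_{R' ∈ 𝒜_b} Q R'`, where `𝒜_0 = ∅` and
`𝒜_{b+1} = 𝒜_{a b} ∪ {(v_{a b},…,v_b)}` if `Δ_b > 0` (with `a b` the chosen argmax), and
`𝒜_{b+1} = 𝒜_b` otherwise. -/
theorem stmt8 {V : Type*} [DecidableEq V] (Q : List V → ℚ)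
    (R : List V) (hnd : R.Nodup)
    (g : ℕ → ℚ) (a : ℕ → ℕ)
    (ha_le : ∀ b, a b ≤ b)
    (ha_max : ∀ b < R.length, ∀ a' ≤ b,
      Q ((R.drop a').take (b + 1 - a')) - ∑ i ∈ Finset.Ico a' b, g i ≤
        Q ((R.drop (a b)).take (b + 1 - a b)) - ∑ i ∈ Finset.Ico (a b) b, g i)
    (hg : ∀ b < R.length, g b =
      max (Q ((R.drop (a b)).take (b + 1 - a b)) - ∑ i ∈ Finset.Ico (a b) b, g i) 0)
    (A : ℕ → Finset (List V))
    (hA0 : A 0 = ∅)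
    (hA : ∀ b < R.length, A (b + 1) =
      if 0 < Q ((R.drop (a b)).take (b + 1 - a b)) - ∑ i ∈ Finset.Ico (a b) b, g i
      then insert ((R.drop (a b)).take (b + 1 - a b)) (A (a b))
      else A b) :
    ∀ n ≤ R.length, ∑ i ∈ Finset.range n, g i = ∑ R' ∈ A n, Q R' :=
  stmt8_general Q R hnd g a ha_le hg A hA0 hA
end

section
/- There exists a route-cost function Q on the subroutes of a single route R = (v₁, v₂, v₃) that is weakly superadditive but not superadditive; concretely, with Q(R) = 3, Q((v₁)) = Q((v₂)) = Q((v₃)) = Q((v₁,v₂)) = 1, Q((v₂,v₃)) = 0, the function Q is weakly superadditive with respect to the admissible-route set {R}, yet Q((v₂,v₃)) < Q((v₂)) + Q((v₃)). -/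
/-- There is a route-cost function on the subroutes of the single admissible route
`R = (v₁, v₂, v₃)` that is weakly superadditive but not superadditive: with `Q R = 3`,
`Q (v₁) = Q (v₂) = Q (v₃) = Q (v₁,v₂) = 1` and `Q (v₂,v₃) = 0`, weak superadditivity holds
for the admissible-route set `{R}`, yet `Q (v₂,v₃) < Q (v₂) + Q (v₃)`. -/
theorem stmt10 : ∃ Q : List (Fin 3) → ℚ,
    Q [0, 1, 2] = 3 ∧ Q [0] = 1 ∧ Q [1] = 1 ∧ Q [2] = 1 ∧
    Q [0, 1] = 1 ∧ Q [1, 2] = 0 ∧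
    (∀ (t : ℕ) (Rs : Fin t → List (Fin 3)),
      (∀ i, Rs i <:+: [0, 1, 2]) →
      (∀ i j, i ≠ j → (Rs i).Disjoint (Rs j)) →
      ∑ i, Q (Rs i) ≤ Q [0, 1, 2]) ∧
    Q [1, 2] < Q [1] + Q [2] := by
  refine ⟨fun L => if L = [0, 1, 2] then 3 else if L = [0] then 1 else if L = [1] then 1
    else if L = [2] then 1 else if L = [0, 1] then 1 else 0, by decide, by decide,
    by decide, by decide, by decide, by decide, ?_, by norm_num [show ((2:Fin 3)) ≠ 0 from by decide]⟩
  intro t Rs hinf hdisj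
  simp only [if_pos rfl]
  have hQle : ∀ L : List (Fin 3),
      (if L = [0, 1, 2] then (3 : ℚ) else if L = [0] then 1 else if L = [1] then 1
        else if L = [2] then 1 else if L = [0, 1] then 1 else 0) ≤ L.length := by
    intro L
    split_ifs with h1 h2 h3 h4 h5 <;> simp_all
  calc ∑ i, (if Rs i = [0, 1, 2] then (3 : ℚ) else if Rs i = [0] then 1 else if Rs i = [1] then 1
        else if Rs i = [2] then 1 else if Rs i = [0, 1] then 1 else 0)
      ≤ ∑ i, ((Rs i).length : ℚ) := Finset.sum_le_sum fun i _ => hQle (Rs i)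
    _ ≤ 3 := by
        have hnodup : ∀ i, (Rs i).Nodup := fun i =>
          ((hinf i).sublist).nodup (by decide)
        have hcard : ∀ i, (Rs i).toFinset.card = (Rs i).length := fun i =>
          List.toFinset_card_of_nodup (hnodup i)
        have hdisj' : ∀ i ∈ Finset.univ, ∀ j ∈ Finset.univ, i ≠ j →
            Disjoint (Rs i).toFinset (Rs j).toFinset := by
          intro i _ j _ hij
          rw [List.disjoint_toFinset_iff_disjoint]
          exact hdisj i j hij
        have := Finset.card_biUnion hdisj'
        have hle : (Finset.univ.biUnion fun i => (Rs i).toFinset).card ≤ 3 := by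
          have := Finset.card_le_univ (Finset.univ.biUnion fun i => (Rs i).toFinset)
          simpa using this
        have hsum : ∑ i, (Rs i).length ≤ 3 := by
          calc ∑ i, (Rs i).length = ∑ i, (Rs i).toFinset.card := by
                simp [hcard]
            _ = (Finset.univ.biUnion fun i => (Rs i).toFinset).card := this.symm
            _ ≤ 3 := hle
        calc ∑ i, ((Rs i).length : ℚ) = ((∑ i, (Rs i).length : ℕ) : ℚ) := by
              push_cast; ring
          _ ≤ 3 := by exact_mod_cast hsum
end

section
/- Let x̄ be an integer vector satisfying the degree constraints x̄(δ(v)) = 2 for all customers v and the subtour elimination constraints x̄(S) ≤ |S| - 1 for all nonempty S ⊆ V₊, with x̄ ∈ {0,1,2}^E corresponding to a routing plan with k routes. Then the Gendreau activation function W(x̄) = 1 + x̄(E(G(x̄))∖δ(0)) - |V₊| + k equals 1 at x̄ itself, and W(x') ≤ 0 for every other integer vector x' in the same feasible set with k routes. -/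
open scoped Classical

noncomputable section

/-- `x(S)`: sum of `x` over the non-loop edges with both endpoints in `S`. -/
def xIn {Vp : Type*} [DecidableEq Vp] (x : Sym2 (Option Vp) → ℤ)
    (S : Finset (Option Vp)) : ℤ :=
  ∑ e ∈ S.sym2.filter (fun e => ¬ e.IsDiag), x e

/-- `x(δ(v))`: sum of `x` over the edges incident to `v`. -/
def xDeg {Vp : Type*} [Fintype Vp] [DecidableEq Vp] (x : Sym2 (Option Vp) → ℤ)
    (v : Option Vp) : ℤ :=
  ∑ e ∈ Finset.univ.filter (fun e : Sym2 (Option Vp) => v ∈ e ∧ ¬ e.IsDiag), x e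

/-- Integer vectors `x ∈ {0,1,2}^E` satisfying the degree constraints, the subtour
elimination constraints, and using `k` vehicles (`x(δ(0)) = 2k`); the depot is `none`. -/
def SDFeasible {Vp : Type*} [Fintype Vp] [DecidableEq Vp]
    (x : Sym2 (Option Vp) → ℤ) (k : ℕ) : Prop :=
  (∀ e, 0 ≤ x e ∧ x e ≤ 2) ∧
  (∀ e : Sym2 (Option Vp), e.IsDiag → x e = 0) ∧
  (∀ v : Vp, xDeg x (some v) = 2) ∧
  (∀ S : Finset Vp, S.Nonempty → xIn x (S.image some) ≤ (S.card : ℤ) - 1) ∧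
  xDeg x (none : Option Vp) = 2 * k

/-- The Gendreau activation function
`W(x') = 1 + x'(E(G(x̄)) ∖ δ(0)) - |V₊| + k` built from the support of `x̄`. -/
def gendreauW {Vp : Type*} [Fintype Vp] [DecidableEq Vp]
    (xbar x' : Sym2 (Option Vp) → ℤ) (k : ℕ) : ℤ :=
  1 + (∑ e ∈ Finset.univ.filter
        (fun e : Sym2 (Option Vp) => ¬ e.IsDiag ∧ (none : Option Vp) ∉ e ∧ 0 < xbar e),
          x' e)
    - (Fintype.card Vp : ℤ) + (k : ℤ)

section Aux

open Finset
variable {Vp : Type*} [Fintype Vp] [DecidableEq Vp]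

private lemma card_mem_count (e : Sym2 (Option Vp)) (hd : ¬ e.IsDiag) :
    (univ.filter (fun v : Vp => some v ∈ e)).card = if (none : Option Vp) ∈ e then 1 else 2 := by
  induction e using Sym2.inductionOn with
  | hf a b =>
    match a, b with
    | none, none => simp at hd
    | none, some w =>
        have h1 : univ.filter (fun v : Vp => some v ∈ s(none, some w)) = {w} := by
          ext v; simp
        rw [h1]; simp
    | some w, none =>
        have h1 : univ.filter (fun v : Vp => some v ∈ s(some w, none)) = {w} := by
          ext v; simp
        rw [h1]; simp
    | some u, some w =>
        have huw : u ≠ w := by simpa using hd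
        have h1 : univ.filter (fun v : Vp => some v ∈ s(some u, some w)) = {u, w} := by
          ext v; simp
        rw [h1]
        simp [Finset.card_pair huw]

private lemma nondepot_sum (x : Sym2 (Option Vp) → ℤ) (k : ℕ) (hx : SDFeasible x k) :
    ∑ e ∈ univ.filter (fun e : Sym2 (Option Vp) => ¬ e.IsDiag ∧ (none : Option Vp) ∉ e), x e
      = (Fintype.card Vp : ℤ) - k := by
  obtain ⟨hb, hdiag, hdeg, hsub, hdep⟩ := hx
  have key : ∑ v : Vp, xDeg x (some v) = 2 * (Fintype.card Vp : ℤ) := by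
    simp [hdeg, mul_comm]
  have expand : ∑ v : Vp, xDeg x (some v)
      = ∑ e ∈ univ.filter (fun e : Sym2 (Option Vp) => ¬ e.IsDiag),
          (if (none : Option Vp) ∈ e then 1 else 2) * x e := by
    simp only [xDeg, Finset.sum_filter]
    rw [Finset.sum_comm]
    refine Finset.sum_congr rfl ?_
    intro e _
    by_cases hd : e.IsDiag
    · simp [hd]
    · simp only [hd, not_false_eq_true, and_true, if_true]
      rw [← Finset.sum_filter, Finset.sum_const, card_mem_count e hd, nsmul_eq_mul]
      split_ifs <;> norm_num
  have split : ∑ e ∈ univ.filter (fun e : Sym2 (Option Vp) => ¬ e.IsDiag),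
      (if (none : Option Vp) ∈ e then 1 else 2) * x e
    = xDeg x (none : Option Vp)
      + 2 * ∑ e ∈ univ.filter (fun e : Sym2 (Option Vp) => ¬ e.IsDiag ∧ (none : Option Vp) ∉ e), x e := by
    rw [← Finset.sum_filter_add_sum_filter_not
        (univ.filter (fun e : Sym2 (Option Vp) => ¬ e.IsDiag)) (fun e => (none : Option Vp) ∈ e)]
    congr 1
    · rw [Finset.filter_filter]
      rw [xDeg]
      rw [show (univ.filter (fun e : Sym2 (Option Vp) => ¬ e.IsDiag ∧ (none : Option Vp) ∈ e))
          = (univ.filter (fun e : Sym2 (Option Vp) => (none : Option Vp) ∈ e ∧ ¬ e.IsDiag)) by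
        apply Finset.filter_congr; intro e _; simp [and_comm]]
      refine Finset.sum_congr rfl ?_
      intro e he
      simp only [Finset.mem_filter] at he
      rw [if_pos he.2.1, one_mul]
    · rw [Finset.filter_filter, Finset.mul_sum]
      refine Finset.sum_congr rfl ?_
      intro e he
      simp only [Finset.mem_filter] at he
      rw [if_neg he.2.2]
  rw [expand, split, hdep] at key
  linarith

private lemma nondepot_le_one (x : Sym2 (Option Vp) → ℤ) (k : ℕ) (hx : SDFeasible x k)
    (e : Sym2 (Option Vp)) (hd : ¬ e.IsDiag) (hn : (none : Option Vp) ∉ e) : x e ≤ 1 := by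
  induction e using Sym2.inductionOn with
  | hf a b =>
    match a, b with
    | none, _ => simp at hn
    | some u, none => simp at hn
    | some u, some w =>
      have huw : u ≠ w := by simpa using hd
      have h := hx.2.2.2.1 {u, w} (by simp)
      rw [xIn] at h
      have hset : ((({u, w} : Finset Vp).image some).sym2).filter (fun e => ¬ e.IsDiag)
          = {s(some u, some w)} := by
        ext e'
        simp only [Finset.mem_filter, Finset.mem_singleton, Finset.mem_sym2_iff]
        constructor
        · rintro ⟨hmem, hnd⟩
          induction e' using Sym2.inductionOn with
          | hf c d =>
            have hc := hmem c (by simp)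
            have hd := hmem d (by simp)
            simp only [Finset.mem_image, Finset.mem_insert, Finset.mem_singleton] at hc hd
            obtain ⟨c', hc', rfl⟩ := hc
            obtain ⟨d', hd', rfl⟩ := hd
            have hcd : c' ≠ d' := by simpa using hnd
            rcases hc' with rfl | rfl <;> rcases hd' with rfl | rfl
            · exact absurd rfl hcd
            · rfl
            · rw [Sym2.eq_swap]
            · exact absurd rfl hcd
        · rintro rfl
          refine ⟨?_, by simpa using huw⟩
          intro y hy
          simp only [Sym2.mem_iff] at hy
          rcases hy with rfl | rfl <;> simp
      rw [hset, Finset.sum_singleton, Finset.card_pair huw] at h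
      push_cast at h
      linarith

private lemma depot_split (x : Sym2 (Option Vp) → ℤ) (v : Vp) :
    xDeg x (some v) = x s(none, some v)
      + ∑ e ∈ univ.filter (fun e : Sym2 (Option Vp) =>
          (some v ∈ e ∧ ¬ e.IsDiag) ∧ (none : Option Vp) ∉ e), x e := by
  rw [xDeg, ← Finset.sum_filter_add_sum_filter_not
      (univ.filter (fun e : Sym2 (Option Vp) => some v ∈ e ∧ ¬ e.IsDiag))
      (fun e => (none : Option Vp) ∈ e)]
  rw [Finset.filter_filter, Finset.filter_filter]
  congr 1
  have hsing : univ.filter (fun e : Sym2 (Option Vp) =>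
      (some v ∈ e ∧ ¬ e.IsDiag) ∧ (none : Option Vp) ∈ e) = {s(none, some v)} := by
    ext e
    simp only [Finset.mem_filter, Finset.mem_singleton, Finset.mem_univ, true_and]
    constructor
    · rintro ⟨⟨hv, hnd⟩, hn⟩
      induction e using Sym2.inductionOn with
      | hf c d =>
        simp only [Sym2.mem_iff] at hv hn
        rcases hn with rfl | rfl <;> rcases hv with h1 | h1
        · exact absurd h1.symm (by simp)
        · rw [h1]
        · rw [h1, Sym2.eq_swap]
        · exact absurd h1.symm (by simp)
    · rintro rfl
      simp
  rw [hsing, Finset.sum_singleton]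

end Aux

/-- The Gendreau activation function equals `1` at `x̄` itself and is `≤ 0` at every other
feasible integer vector with `k` routes. -/
theorem stmt12 {Vp : Type*} [Fintype Vp] [DecidableEq Vp] (k : ℕ)
    (xbar : Sym2 (Option Vp) → ℤ) (hxbar : SDFeasible xbar k) :
    gendreauW xbar xbar k = 1 ∧
    ∀ x' : Sym2 (Option Vp) → ℤ, SDFeasible x' k → x' ≠ xbar →
      gendreauW xbar x' k ≤ 0 := by
  classical
  set F2 : Finset (Sym2 (Option Vp)) :=
    Finset.univ.filter (fun e : Sym2 (Option Vp) => ¬ e.IsDiag ∧ (none : Option Vp) ∉ e) with hF2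
  set S : Finset (Sym2 (Option Vp)) :=
    Finset.univ.filter
      (fun e : Sym2 (Option Vp) => ¬ e.IsDiag ∧ (none : Option Vp) ∉ e ∧ 0 < xbar e) with hS
  have hSsub : S ⊆ F2 := by
    intro e he
    simp only [hS, hF2, Finset.mem_filter] at he ⊢
    exact ⟨he.1, he.2.1, he.2.2.1⟩
  have hbarA : ∑ e ∈ F2, xbar e = (Fintype.card Vp : ℤ) - k := nondepot_sum xbar k hxbar
  constructor
  · have hsum : ∑ e ∈ S, xbar e = ∑ e ∈ F2, xbar e := by
      refine Finset.sum_subset hSsub ?_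
      intro e heF heS
      simp only [hS, Finset.mem_filter, Finset.mem_univ, true_and] at heS
      simp only [hF2, Finset.mem_filter, Finset.mem_univ, true_and] at heF
      have h0 := (hxbar.1 e).1
      push_neg at heS
      have := heS heF.1 heF.2
      omega
    rw [gendreauW]
    rw [show (Finset.univ.filter
        (fun e : Sym2 (Option Vp) => ¬ e.IsDiag ∧ (none : Option Vp) ∉ e ∧ 0 < xbar e)) = S from rfl]
    rw [hsum, hbarA]
    ring
  · intro x' hx' hne
    have hA' : ∑ e ∈ F2, x' e = (Fintype.card Vp : ℤ) - k := nondepot_sum x' k hx'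
    by_cases hcase : ∃ e ∈ F2, xbar e ≤ 0 ∧ 1 ≤ x' e
    · obtain ⟨e0, he0F, he0b, he0x⟩ := hcase
      have he0S : e0 ∉ S := by
        simp only [hS, Finset.mem_filter]
        intro h
        omega
      have hins : insert e0 S ⊆ F2 := by
        intro e he
        rcases Finset.mem_insert.mp he with rfl | he
        · exact he0F
        · exact hSsub he
      have hle : ∑ e ∈ insert e0 S, x' e ≤ ∑ e ∈ F2, x' e := by
        refine Finset.sum_le_sum_of_subset_of_nonneg hins ?_
        intro e _ _
        exact (hx'.1 e).1
      rw [Finset.sum_insert he0S] at hle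
      have hSx : ∑ e ∈ S, x' e ≤ (Fintype.card Vp : ℤ) - k - 1 := by
        rw [hA'] at hle; linarith
      rw [gendreauW]
      rw [show (Finset.univ.filter
          (fun e : Sym2 (Option Vp) => ¬ e.IsDiag ∧ (none : Option Vp) ∉ e ∧ 0 < xbar e)) = S from rfl]
      linarith
    · exfalso
      push_neg at hcase
      -- x' e ≤ xbar e on F2
      have hptle : ∀ e ∈ F2, x' e ≤ xbar e := by
        intro e he
        simp only [hF2, Finset.mem_filter, Finset.mem_univ, true_and] at he
        by_cases hb : 0 < xbar e
        · have := nondepot_le_one x' k hx' e he.1 he.2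
          omega
        · have hb0 := (hxbar.1 e).1
          have h1 := hcase e (by simp [hF2, Finset.mem_filter, he.1, he.2]) (by omega)
          have := (hx'.1 e).1
          omega
      have hzero : ∑ e ∈ F2, (xbar e - x' e) = 0 := by
        rw [Finset.sum_sub_distrib, hbarA, hA']; ring
      have hpt : ∀ e ∈ F2, x' e = xbar e := by
        intro e he
        have := (Finset.sum_eq_zero_iff_of_nonneg
          (fun e he => by linarith [hptle e he])).mp hzero e he
        linarith
      -- depot edges
      have hdep : ∀ v : Vp, x' s(none, some v) = xbar s(none, some v) := by
        intro v
        have h1 := depot_split x' v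
        have h2 := depot_split xbar v
        rw [hx'.2.2.1 v] at h1
        rw [hxbar.2.2.1 v] at h2
        have hT : ∑ e ∈ Finset.univ.filter (fun e : Sym2 (Option Vp) =>
              (some v ∈ e ∧ ¬ e.IsDiag) ∧ (none : Option Vp) ∉ e), x' e
            = ∑ e ∈ Finset.univ.filter (fun e : Sym2 (Option Vp) =>
              (some v ∈ e ∧ ¬ e.IsDiag) ∧ (none : Option Vp) ∉ e), xbar e := by
          refine Finset.sum_congr rfl ?_
          intro e he
          simp only [Finset.mem_filter, Finset.mem_univ, true_and] at he
          exact hpt e (by simp [hF2, Finset.mem_filter, he.1.2, he.2])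
        rw [hT] at h1
        linarith
      apply hne
      funext e
      induction e using Sym2.inductionOn with
      | hf a b =>
        match a, b with
        | none, none =>
            rw [hx'.2.1 _ (by simp), hxbar.2.1 _ (by simp)]
        | none, some v => exact hdep v
        | some v, none =>
            rw [Sym2.eq_swap]; exact hdep v
        | some u, some w =>
            by_cases huw : u = w
            · subst huw
              rw [hx'.2.1 _ (by simp), hxbar.2.1 _ (by simp)]
            · exact hpt _ (by simp [hF2, Finset.mem_filter, huw])

end
end
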